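/- arXiv:2503.01626 — 3 statements merged into one kernel-verified Lean document; each statement's English description precedes it below -/
import Mathlib

section
/- Let M be a nonempty subset of Euclidean n-space. For every natural number t, every point p of the level-t approximation C_t(M) satisfies infDist(p, M) ≤ 2^{-t} · ‖b − a‖; that is, every point of the subdivision approximation at level t is within the level-t voxel diameter of the target set M. -/
open Set Metric Filter MeasureTheory ENNReal

noncomputable section

variable {n : ℕ}

/-- The bounding voxel `V₀ = {x | ∀ i, a i ≤ x i ∧ x i < b i}`. -/
def boundingVoxel (a b : EuclideanSpace ℝ (Fin n)) : Set (EuclideanSpace ℝ (Fin n)) :=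
  {x | ∀ i, a i ≤ x i ∧ x i < b i}

/-- The level-`t` dyadic sub-voxel `D_t(k)`. -/
def subVoxel (a b : EuclideanSpace ℝ (Fin n)) (t : ℕ) (k : Fin n → ℕ) :
    Set (EuclideanSpace ℝ (Fin n)) :=
  {x | ∀ i, a i + (k i : ℝ) * (b i - a i) / 2 ^ t ≤ x i ∧
            x i < a i + ((k i : ℝ) + 1) * (b i - a i) / 2 ^ t}

/-- The retained indices `Q_t(M)`: admissible `k` whose closed sub-voxel meets `M`. -/
def retained (a b : EuclideanSpace ℝ (Fin n)) (t : ℕ) (M : Set (EuclideanSpace ℝ (Fin n))) :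
    Set (Fin n → ℕ) :=
  {k | (∀ i, k i < 2 ^ t) ∧ (closure (subVoxel a b t k) ∩ M).Nonempty}

/-- The level-`t` approximation `C_t(M)`: union of the closures of retained sub-voxels. -/
def approx (a b : EuclideanSpace ℝ (Fin n)) (t : ℕ) (M : Set (EuclideanSpace ℝ (Fin n))) :
    Set (EuclideanSpace ℝ (Fin n)) :=
  ⋃ k ∈ retained a b t M, closure (subVoxel a b t k)

lemma closure_subVoxel_subset (a b : EuclideanSpace ℝ (Fin n)) (t : ℕ) (k : Fin n → ℕ) :
    closure (subVoxel a b t k) ⊆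
      {x | ∀ i, a i + (k i : ℝ) * (b i - a i) / 2 ^ t ≤ x i ∧
                x i ≤ a i + ((k i : ℝ) + 1) * (b i - a i) / 2 ^ t} := by
  have hS : IsClosed {x : EuclideanSpace ℝ (Fin n) |
      ∀ i, a i + (k i : ℝ) * (b i - a i) / 2 ^ t ≤ x i ∧
           x i ≤ a i + ((k i : ℝ) + 1) * (b i - a i) / 2 ^ t} := by
    have : {x : EuclideanSpace ℝ (Fin n) |
        ∀ i, a i + (k i : ℝ) * (b i - a i) / 2 ^ t ≤ x i ∧
             x i ≤ a i + ((k i : ℝ) + 1) * (b i - a i) / 2 ^ t} =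
        ⋂ i, (fun x : EuclideanSpace ℝ (Fin n) => x i) ⁻¹'
          Set.Icc (a i + (k i : ℝ) * (b i - a i) / 2 ^ t)
                  (a i + ((k i : ℝ) + 1) * (b i - a i) / 2 ^ t) := by
      ext x; simp [Set.mem_Icc, Set.mem_iInter]
    rw [this]
    exact isClosed_iInter fun i =>
      isClosed_Icc.preimage (EuclideanSpace.proj i).continuous
  refine closure_minimal ?_ hS
  intro x hx i
  exact ⟨(hx i).1, (hx i).2.le⟩

/-- every point of `C_t(M)` is within distance `2^{-t}·‖b - a‖` of `M`. -/
theorem infDist_le_of_mem_approx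
    (n : ℕ) (hn : 1 ≤ n) (a b : EuclideanSpace ℝ (Fin n)) (hab : ∀ i, a i < b i)
    (M : Set (EuclideanSpace ℝ (Fin n))) (hM : M.Nonempty)
    (t : ℕ) (p : EuclideanSpace ℝ (Fin n)) (hp : p ∈ approx a b t M) :
    Metric.infDist p M ≤ (2 : ℝ) ^ (-(t : ℤ)) * ‖b - a‖ := by
  rw [approx] at hp
  simp only [Set.mem_iUnion] at hp
  obtain ⟨k, hk, hpk⟩ := hp
  obtain ⟨q, hqcl, hqM⟩ := hk.2
  have hdist : dist p q ≤ (2 : ℝ) ^ (-(t : ℤ)) * ‖b - a‖ := by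
    have hp' := closure_subVoxel_subset a b t k hpk
    have hq' := closure_subVoxel_subset a b t k hqcl
    have hcomp : ∀ i, |p i - q i| ≤ (b i - a i) / 2 ^ t := by
      intro i
      obtain ⟨hp1, hp2⟩ := hp' i
      obtain ⟨hq1, hq2⟩ := hq' i
      have hring : (↑(k i) + 1) * (b i - a i) / 2 ^ t - ↑(k i) * (b i - a i) / 2 ^ t
          = (b i - a i) / 2 ^ t := by ring
      rw [abs_sub_le_iff]
      constructor <;> linarith
    have hpq : dist p q = Real.sqrt (∑ i, (p i - q i) ^ 2) := by
      rw [EuclideanSpace.dist_eq]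
      congr 1
      exact Finset.sum_congr rfl fun i _ => by rw [Real.dist_eq, sq_abs]
    have hnorm : ‖b - a‖ = Real.sqrt (∑ i, (b i - a i) ^ 2) := by
      rw [EuclideanSpace.norm_eq]
      congr 1
      exact Finset.sum_congr rfl fun i _ => by
        simp [PiLp.sub_apply, Real.norm_eq_abs, sq_abs]
    rw [hpq, hnorm]
    have hsum : (∑ i, (p i - q i) ^ 2) ≤ (∑ i, (b i - a i) ^ 2) / (2 ^ t) ^ 2 := by
      rw [Finset.sum_div]
      refine Finset.sum_le_sum fun i _ => ?_
      have h1 : |p i - q i| ^ 2 ≤ ((b i - a i) / 2 ^ t) ^ 2 := by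
        apply sq_le_sq' _ (hcomp i)
        have := abs_nonneg (p i - q i)
        have h2 : (0:ℝ) ≤ (b i - a i) / 2 ^ t :=
          div_nonneg (by linarith [hab i]) (by positivity)
        linarith
      calc (p i - q i) ^ 2 = |p i - q i| ^ 2 := (sq_abs _).symm
        _ ≤ ((b i - a i) / 2 ^ t) ^ 2 := h1
        _ = (b i - a i) ^ 2 / (2 ^ t) ^ 2 := div_pow _ _ _
    calc Real.sqrt (∑ i, (p i - q i) ^ 2)
        ≤ Real.sqrt ((∑ i, (b i - a i) ^ 2) / (2 ^ t) ^ 2) := Real.sqrt_le_sqrt hsum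
      _ = Real.sqrt (∑ i, (b i - a i) ^ 2) / 2 ^ t := by
          rw [Real.sqrt_div (Finset.sum_nonneg fun i _ => sq_nonneg _),
            Real.sqrt_sq (by positivity : (0:ℝ) ≤ (2:ℝ) ^ t)]
      _ = (2 : ℝ) ^ (-(t : ℤ)) * Real.sqrt (∑ i, (b i - a i) ^ 2) := by
          rw [zpow_neg, zpow_natCast]
          ring
  calc Metric.infDist p M ≤ dist p q := Metric.infDist_le_dist_of_mem hqM
    _ ≤ _ := hdist
end
end

section
/- For every subset M of Euclidean n-space, the limit of the subdivision approximations is contained in the closure of M: ⋂_{t ∈ ℕ} C_t(M) ⊆ closure(M). -/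
open Set Metric Filter MeasureTheory ENNReal

noncomputable section

variable {n : ℕ}

/-- the limit `⋂ t, C_t(M)` is contained in the closure of `M`. -/
theorem iInter_approx_subset_closure
    (n : ℕ) (hn : 1 ≤ n) (a b : EuclideanSpace ℝ (Fin n)) (hab : ∀ i, a i < b i)
    (M : Set (EuclideanSpace ℝ (Fin n))) :
    (⋂ t : ℕ, approx a b t M) ⊆ closure M := by
  intro x hx
  rw [Metric.mem_closure_iff]
  intro ε hε
  set S : ℝ := ∑ i, (b i - a i) with hS
  have hS0 : 0 ≤ S := Finset.sum_nonneg fun i _ => sub_nonneg.2 (hab i).le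
  obtain ⟨t, ht⟩ := pow_unbounded_of_one_lt (Real.sqrt n * S / ε) (one_lt_two (α := ℝ))
  have hxt : x ∈ approx a b t M := Set.mem_iInter.1 hx t
  rw [approx, Set.mem_iUnion₂] at hxt
  obtain ⟨k, hk, hxk⟩ := hxt
  obtain ⟨y, hyC, hyM⟩ := hk.2
  refine ⟨y, hyM, ?_⟩
  have hx' := closure_subVoxel_subset a b t k hxk
  have hy' := closure_subVoxel_subset a b t k hyC
  have h2t : (0:ℝ) < 2 ^ t := by positivity
  have hdist_i : ∀ i, dist (x i) (y i) ≤ S / 2 ^ t := by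
    intro i
    have h1 := hx' i
    have h2 := hy' i
    have hL : (b i - a i) ≤ S :=
      Finset.single_le_sum (f := fun j => b j - a j)
        (fun j _ => sub_nonneg.2 (hab j).le) (Finset.mem_univ i)
    have key : a i + ((k i : ℝ) + 1) * (b i - a i) / 2 ^ t -
        (a i + (k i : ℝ) * (b i - a i) / 2 ^ t) = (b i - a i) / 2 ^ t := by ring
    rw [Real.dist_eq, abs_sub_le_iff]
    have hdiv : (b i - a i) / 2 ^ t ≤ S / 2 ^ t := by gcongr
    constructor <;> linarith [h1.1, h1.2, h2.1, h2.2]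
  have hdist : dist x y ≤ Real.sqrt n * (S / 2 ^ t) := by
    rw [EuclideanSpace.dist_eq]
    have hsum : (∑ i, dist (x i) (y i) ^ 2) ≤ (n : ℝ) * (S / 2 ^ t) ^ 2 := by
      calc (∑ i, dist (x i) (y i) ^ 2) ≤ ∑ _i : Fin n, (S / 2 ^ t) ^ 2 :=
            Finset.sum_le_sum fun i _ => by
              have := hdist_i i
              have h0 : 0 ≤ dist (x i) (y i) := dist_nonneg
              nlinarith
        _ = (n : ℝ) * (S / 2 ^ t) ^ 2 := by simp [Finset.sum_const, mul_comm]
    calc Real.sqrt (∑ i, dist (x i) (y i) ^ 2) ≤ Real.sqrt ((n : ℝ) * (S / 2 ^ t) ^ 2) :=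
          Real.sqrt_le_sqrt hsum
      _ = Real.sqrt n * (S / 2 ^ t) := by
          rw [Real.sqrt_mul (by positivity), Real.sqrt_sq (by positivity)]
  have hlt : Real.sqrt n * (S / 2 ^ t) < ε := by
    rw [div_lt_iff₀ hε] at ht
    rw [mul_div_assoc']
    rw [div_lt_iff₀ h2t]
    linarith
  exact hdist.trans_lt hlt
end
end

section
/- Let f : EuclideanSpace ℝ (Fin n) → EuclideanSpace ℝ (Fin m) be continuous, let y be a point of EuclideanSpace ℝ (Fin m), and let M = f⁻¹({y}) be its fiber. If M is contained in the bounding voxel V₀, then the limit of the subdivision approximations recovers the fiber exactly: ⋂_{t ∈ ℕ} C_t(M) = M; in particular (⋂_{t ∈ ℕ} C_t(M)) \ M has Lebesgue measure zero. -/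
open Set Metric Filter MeasureTheory ENNReal

noncomputable section

variable {n : ℕ}

lemma dist_le_of_bounds (a b x z : EuclideanSpace ℝ (Fin n)) (t : ℕ)
    (h : ∀ i, |x i - z i| ≤ (b i - a i) / 2 ^ t) (hab : ∀ i, a i < b i) :
    dist x z ≤ dist a b / 2 ^ t := by
  have h2 : (0:ℝ) < 2 ^ t := by positivity
  rw [EuclideanSpace.dist_eq, EuclideanSpace.dist_eq]
  have key : Real.sqrt (∑ i, dist (a i) (b i) ^ 2) / 2 ^ t
      = Real.sqrt (∑ i, (dist (a i) (b i) / 2 ^ t) ^ 2) := by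
    rw [← Real.sqrt_sq h2.le, ← Real.sqrt_div (by positivity), Finset.sum_div]
    congr 1
    refine Finset.sum_congr rfl fun i _ => ?_
    rw [div_pow, Real.sqrt_sq h2.le]
  rw [key]
  apply Real.sqrt_le_sqrt
  apply Finset.sum_le_sum
  intro i _
  have hle : dist (x i) (z i) ≤ dist (a i) (b i) / 2 ^ t := by
    rw [Real.dist_eq, Real.dist_eq]
    calc |x i - z i| ≤ (b i - a i) / 2 ^ t := h i
      _ ≤ |a i - b i| / 2 ^ t := by
          apply div_le_div_of_nonneg_right ?_ h2.le
          rw [abs_sub_comm, abs_of_nonneg (by linarith [hab i])]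
  exact pow_le_pow_left₀ dist_nonneg hle 2

lemma subset_approx (a b : EuclideanSpace ℝ (Fin n)) (hab : ∀ i, a i < b i)
    (M : Set (EuclideanSpace ℝ (Fin n))) (hM : M ⊆ boundingVoxel a b) (t : ℕ) :
    M ⊆ approx a b t M := by
  intro x hx
  have h2 : (0:ℝ) < 2 ^ t := by positivity
  set k : Fin n → ℕ := fun i => ⌊(x i - a i) * 2 ^ t / (b i - a i)⌋₊ with hk
  have hw : ∀ i, (0:ℝ) < b i - a i := fun i => by linarith [hab i]
  have hb : ∀ i, a i ≤ x i ∧ x i < b i := hM hx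
  have hr0 : ∀ i, (0:ℝ) ≤ (x i - a i) * 2 ^ t / (b i - a i) := fun i =>
    div_nonneg (mul_nonneg (by linarith [(hb i).1]) (by positivity)) (hw i).le
  have hxmem : x ∈ subVoxel a b t k := by
    intro i
    have hfl : (k i : ℝ) ≤ (x i - a i) * 2 ^ t / (b i - a i) := Nat.floor_le (hr0 i)
    have hfu : (x i - a i) * 2 ^ t / (b i - a i) < (k i : ℝ) + 1 := Nat.lt_floor_add_one _
    rw [le_div_iff₀ (hw i)] at hfl
    rw [div_lt_iff₀ (hw i)] at hfu
    constructor
    · rw [← sub_nonneg]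
      have : (k i : ℝ) * (b i - a i) / 2 ^ t ≤ x i - a i := by
        rw [div_le_iff₀ h2]; linarith
      linarith
    · have : x i - a i < ((k i : ℝ) + 1) * (b i - a i) / 2 ^ t := by
        rw [lt_div_iff₀ h2]; linarith
      linarith
  have hklt : ∀ i, k i < 2 ^ t := by
    intro i
    have : (x i - a i) * 2 ^ t / (b i - a i) < 2 ^ t := by
      rw [div_lt_iff₀ (hw i)]
      have h1 : x i - a i < b i - a i := by linarith [(hb i).2]
      nlinarith
    have hcast : (x i - a i) * 2 ^ t / (b i - a i) < ((2 ^ t : ℕ) : ℝ) := by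
      push_cast; exact this
    exact (Nat.floor_lt (hr0 i)).mpr hcast
  refine mem_iUnion₂.mpr ⟨k, ⟨hklt, ⟨x, subset_closure hxmem, hx⟩⟩, subset_closure hxmem⟩

/-- for a fiber `M = f⁻¹({y})` of a continuous map contained in `V₀`,
the limit of the approximations is exactly `M`; in particular the difference has
Lebesgue measure zero. -/
theorem iInter_approx_eq_fiber
    (n m : ℕ) (hn : 1 ≤ n) (hm : 1 ≤ m)
    (a b : EuclideanSpace ℝ (Fin n)) (hab : ∀ i, a i < b i)
    (f : EuclideanSpace ℝ (Fin n) → EuclideanSpace ℝ (Fin m)) (hf : Continuous f)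
    (y : EuclideanSpace ℝ (Fin m)) (M : Set (EuclideanSpace ℝ (Fin n)))
    (hMdef : M = f ⁻¹' {y}) (hM : M ⊆ boundingVoxel a b) :
    (⋂ t : ℕ, approx a b t M) = M ∧
      volume ((⋂ t : ℕ, approx a b t M) \ M) = 0 := by
  have hclosed : IsClosed M := hMdef ▸ isClosed_singleton.preimage hf
  have hmain : (⋂ t : ℕ, approx a b t M) = M := by
    apply Subset.antisymm
    · intro x hx
      rw [← hclosed.closure_eq]
      rw [Metric.mem_closure_iff]
      intro ε hε
      -- pick t with dist a b / 2 ^ t < ε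
      obtain ⟨t, ht⟩ := exists_pow_lt_of_lt_one
        (show 0 < ε / (dist a b + 1) by positivity) (by norm_num : (1:ℝ)/2 < 1)
      have hDt : dist a b / 2 ^ t < ε := by
        have h1 : ((1:ℝ)/2) ^ t = 1 / 2 ^ t := by rw [div_pow, one_pow]
        rw [h1, div_lt_div_iff₀ (by positivity) (by positivity)] at ht
        rw [div_lt_iff₀ (by positivity : (0:ℝ) < 2 ^ t)]
        nlinarith [dist_nonneg (x := a) (y := b)]
      have hxt := mem_iInter.mp hx t
      obtain ⟨k, hkQ, hxk⟩ := mem_iUnion₂.mp hxt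
      obtain ⟨z, hzcl, hzM⟩ := hkQ.2
      refine ⟨z, hzM, ?_⟩
      have hx' := closure_subVoxel_subset a b t k hxk
      have hz' := closure_subVoxel_subset a b t k hzcl
      have hbd : ∀ i, |x i - z i| ≤ (b i - a i) / 2 ^ t := by
        intro i
        have h1 := hx' i
        have h2 := hz' i
        rw [abs_le]
        constructor <;> [skip; skip] <;>
          · have e1 := h1.1; have e2 := h1.2; have e3 := h2.1; have e4 := h2.2
            have : ((k i : ℝ) + 1) * (b i - a i) / 2 ^ t
                - (k i : ℝ) * (b i - a i) / 2 ^ t = (b i - a i) / 2 ^ t := by ring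
            linarith
      exact lt_of_le_of_lt (dist_le_of_bounds a b x z t hbd hab) hDt
    · rw [subset_iInter_iff]
      exact fun t => subset_approx a b hab M hM t
  exact ⟨hmain, by rw [hmain, diff_self]; simp⟩

end
end
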